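/- arXiv:2111.00899 — 4 statements merged into one kernel-verified Lean document; each statement's English description precedes it below -/
import Mathlib

section
/- Under the separation assumption, there exists a map T' : G → S → S such that (i) T'(1)(s) = s for all s in S, (ii) T'(g·h)(s) = T'(g)(T'(h)(s)) for all g, h in G and s in S (so T' is a group action of G on S), (iii) f is equivariant with respect to T', i.e., for every g in G and every a in α one has f(g • a) = T'(g)(f(a)), and (iv) T' is non-trivial: for every g ≠ 1 in G and every a in α, T'(g)(f(a)) ≠ f(a). -/
/-- **Proposition 1 (Non-trivial Equivariance).**
Under the separation assumption, there exists a map `T' : G → S → S`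
(where `S = Set.range f`) that is a group action of `G` on `S`,
with respect to which `f` is equivariant, and which is non-trivial. -/
theorem nontrivial_equivariance {G α β : Type*} [Group G] [MulAction G α]
    (D : Set α) (f : α → β)
    (hsat : ∀ a : α, ∃ g : G, ∃ x ∈ D, a = g • x)
    (hsep : ∀ (g g' : G), ∀ x ∈ D, ∀ x' ∈ D,
      f (g • x) = f (g' • x') → g = g' ∧ x = x') :
    ∃ T' : G → Set.range f → Set.range f,
      (∀ s : Set.range f, T' 1 s = s) ∧
      (∀ (g h : G) (s : Set.range f), T' (g * h) s = T' g (T' h s)) ∧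
      (∀ (g : G) (a : α),
        f (g • a) = (T' g ⟨f a, Set.mem_range_self a⟩ : β)) ∧
      (∀ g : G, g ≠ 1 → ∀ a : α,
        (T' g ⟨f a, Set.mem_range_self a⟩ : β) ≠ f a) := by
  have hinj : Function.Injective f := by
    intro a a' hfa
    obtain ⟨g, x, hx, rfl⟩ := hsat a
    obtain ⟨g', x', hx', rfl⟩ := hsat a'
    obtain ⟨rfl, rfl⟩ := hsep g g' x hx x' hx' hfa
    rfl
  -- pick a preimage for each element of the range
  have pick : ∀ s : Set.range f, ∃ a : α, f a = s := fun s => s.2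
  refine ⟨fun g s => ⟨f (g • Classical.choose (pick s)),
    Set.mem_range_self _⟩, ?_, ?_, ?_, ?_⟩
  · intro s
    ext
    simp only [one_smul]
    exact Classical.choose_spec (pick s)
  · intro g h s
    apply Subtype.ext
    simp only
    have h1 : Classical.choose (pick ⟨f (h • Classical.choose (pick s)),
        Set.mem_range_self _⟩) = h • Classical.choose (pick s) :=
      hinj (Classical.choose_spec (pick ⟨f (h • Classical.choose (pick s)),
        Set.mem_range_self _⟩))
    rw [h1, mul_smul]
  · intro g a
    have h1 : Classical.choose (pick ⟨f a, Set.mem_range_self a⟩) = a :=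
      hinj (Classical.choose_spec (pick ⟨f a, Set.mem_range_self a⟩))
    simp [h1]
  · intro g hg a
    have h1 : Classical.choose (pick ⟨f a, Set.mem_range_self a⟩) = a :=
      hinj (Classical.choose_spec (pick ⟨f a, Set.mem_range_self a⟩))
    simp only [h1]
    intro hcon
    exact hg (by
      obtain ⟨h, x, hx, rfl⟩ := hsat a
      rw [← mul_smul] at hcon
      have := (hsep (g * h) h x hx x hx hcon).1
      exact mul_right_cancel (by rw [this, one_mul]))
end

section
/- Under the separation assumption, there exists a unique map T' : G → S → S satisfying the defining equation T'(g)(f(g' • x)) = f((g·g') • x) for all g, g' in G and all x in D. -/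
/-- Under the separation assumption, there is a unique map `T' : G → S → S`
satisfying the defining equation `T' g (f (g' • x)) = f ((g * g') • x)`
for all `g g' : G` and `x ∈ D`. -/
theorem exists_unique_induced_transformation {G α β : Type*} [Group G] [MulAction G α]
    (D : Set α) (f : α → β)
    (hsat : ∀ a : α, ∃ g : G, ∃ x ∈ D, a = g • x)
    (hsep : ∀ (g g' : G), ∀ x ∈ D, ∀ x' ∈ D,
      f (g • x) = f (g' • x') → g = g' ∧ x = x') :
    ∃! T' : G → Set.range f → Set.range f,
      ∀ (g g' : G), ∀ x ∈ D,
        T' g ⟨f (g' • x), Set.mem_range_self _⟩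
          = ⟨f ((g * g') • x), Set.mem_range_self _⟩ := by
  classical
  -- for each y in range f, decompose it
  have hdec : ∀ y : Set.range f, ∃ g' : G, ∃ x ∈ D, (y : β) = f (g' • x) := by
    rintro ⟨y, a, rfl⟩
    obtain ⟨g', x, hx, rfl⟩ := hsat a
    exact ⟨g', x, hx, rfl⟩
  choose gd xd hxd hfd using hdec
  refine ⟨fun g y => ⟨f ((g * gd y) • xd y), Set.mem_range_self _⟩, ?_, ?_⟩
  · intro g g' x hx
    set y : Set.range f := ⟨f (g' • x), Set.mem_range_self _⟩
    obtain ⟨h1, h2⟩ := hsep (gd y) g' (xd y) (hxd y) x hx (hfd y).symm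
    simp only [h1, h2]
  · intro T hT
    funext g y
    have h2 := hT g (gd y) (xd y) (hxd y)
    have hy : (⟨f (gd y • xd y), Set.mem_range_self _⟩ : Set.range f) = y :=
      (Subtype.ext (hfd y)).symm
    rw [hy] at h2
    exact h2
end

section
/- Under the separation assumption, any map T' : G → S → S satisfying the defining equation of the induced transformation satisfies compositionality: T'(g)(T'(h)(s)) = T'(g·h)(s) for all g, h in G and all s in S. -/
/-- Under the separation assumption, any map `T' : G → S → S` satisfying the
defining equation of the induced transformation satisfies compositionality. -/
theorem induced_transformation_comp {G α β : Type*} [Group G] [MulAction G α]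
    (D : Set α) (f : α → β)
    (hsat : ∀ a : α, ∃ g : G, ∃ x ∈ D, a = g • x)
    (hsep : ∀ (g g' : G), ∀ x ∈ D, ∀ x' ∈ D,
      f (g • x) = f (g' • x') → g = g' ∧ x = x')
    (T' : G → Set.range f → Set.range f)
    (hT' : ∀ (g g' : G), ∀ x ∈ D,
      T' g ⟨f (g' • x), Set.mem_range_self _⟩
        = ⟨f ((g * g') • x), Set.mem_range_self _⟩) :
    ∀ (g h : G) (s : Set.range f), T' g (T' h s) = T' (g * h) s := by
  rintro g h ⟨s, a, rfl⟩
  obtain ⟨g', x, hx, rfl⟩ := hsat a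
  have h1 := hT' h g' x hx
  have h2 := hT' g (h * g') x hx
  have h3 := hT' (g * h) g' x hx
  rw [h1, h2, h3, mul_assoc]
end

section
/- Under the separation assumption, any map T' : G → S → S satisfying the defining equation of the induced transformation makes f commute with the group action: for every g in G and every a in α, f(g • a) = T'(g)(f(a)). -/
/-- Under the separation assumption, any map `T' : G → S → S` satisfying the
defining equation of the induced transformation makes `f` commute with the
group action: `f (g • a) = T' g (f a)`. -/
theorem induced_transformation_equivariant {G α β : Type*} [Group G] [MulAction G α]
    (D : Set α) (f : α → β)
    (hsat : ∀ a : α, ∃ g : G, ∃ x ∈ D, a = g • x)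
    (hsep : ∀ (g g' : G), ∀ x ∈ D, ∀ x' ∈ D,
      f (g • x) = f (g' • x') → g = g' ∧ x = x')
    (T' : G → Set.range f → Set.range f)
    (hT' : ∀ (g g' : G), ∀ x ∈ D,
      T' g ⟨f (g' • x), Set.mem_range_self _⟩
        = ⟨f ((g * g') • x), Set.mem_range_self _⟩) :
    ∀ (g : G) (a : α), f (g • a) = (T' g ⟨f a, Set.mem_range_self a⟩ : β) := by
  intro g a
  obtain ⟨g', x, hx, rfl⟩ := hsat a
  have := hT' g g' x hx
  rw [show (⟨f (g' • x), Set.mem_range_self (g' • x)⟩ : Set.range f)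
      = ⟨f (g' • x), Set.mem_range_self _⟩ from rfl, this]
  simp [mul_smul]
end
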